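/- Let C_axis ∈ ℝ^{m×m×m} be the axis core tensor and let M ∈ ℝ^{m×m²} be its second flattening, with entries M_{j,(i,k)} = c_{ijk}. Then for every vector v ∈ ℝ^m one has ‖Mᵀ v‖ ≥ ‖v‖/6 in the Euclidean norm; equivalently, all singular values of M are at least 1/6, i.e. M Mᵀ − (1/36)·I is positive semidefinite. -/
import Mathlib


open Matrix

/-- The axis core tensor over `ℝ`. -/
noncomputable def caxis (m : ℕ) : Fin m → Fin m → Fin m → ℝ := fun i j k =>
  if i < j ∧ j < k then 1
  else if (i < j ∧ j = k) ∨ (i = j ∧ j < k) then 1 / 2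
  else if i = j ∧ j = k then 1 / 6
  else 0

/-- The second flattening `M` of the axis core tensor, with `M_{j,(i,k)} = c_{ijk}`. -/
noncomputable def secondFlattening (m : ℕ) : Matrix (Fin m) (Fin m × Fin m) ℝ :=
  Matrix.of fun j p => caxis m p.1 j p.2

lemma caxis_diag {m : ℕ} (j j' : Fin m) :
    caxis m j j' j = if j' = j then 1 / 6 else 0 := by
  unfold caxis
  rcases eq_or_ne j' j with h | h
  · subst h; simp [lt_irrefl]
  · rw [if_neg h, if_neg (fun hh : j < j' ∧ j' < j => absurd (hh.1.trans hh.2) (lt_irrefl _)),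
      if_neg, if_neg (fun hh : j = j' ∧ j' = j => h hh.2)]
    rintro (⟨a, he⟩ | ⟨he, a⟩)
    · exact h he
    · subst he; exact absurd a (lt_irrefl _)

/-- All singular values of the second flattening of the axis core tensor are at
least `1/6`: for every `v ∈ ℝ^m`, `‖Mᵀ v‖ ≥ ‖v‖ / 6`. -/
theorem axis_second_flattening_singular_values_ge (m : ℕ)
    (v : EuclideanSpace ℝ (Fin m)) :
    Real.sqrt (∑ p : Fin m × Fin m, (∑ j, secondFlattening m j p * v j) ^ 2)
      ≥ ‖v‖ / 6 := by
  have hdiag : ∀ j : Fin m, (∑ j', secondFlattening m j' (j, j) * v j') = v j / 6 := by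
    intro j
    have : ∀ j' : Fin m, secondFlattening m j' (j, j) * v j'
        = if j' = j then v j' / 6 else 0 := by
      intro j'
      simp only [secondFlattening, Matrix.of_apply, caxis_diag]
      split_ifs <;> ring
    rw [Finset.sum_congr rfl (fun j' _ => this j')]
    simp
  have hinj : Function.Injective (fun j : Fin m => ((j, j) : Fin m × Fin m)) := by
    intro a b h; exact (Prod.mk.injEq _ _ _ _).mp h |>.1
  have key : (∑ j : Fin m, (v j / 6) ^ 2)
      ≤ ∑ p : Fin m × Fin m, (∑ j, secondFlattening m j p * v j) ^ 2 := by
    have := Finset.sum_le_sum_of_subset_of_nonneg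
      (s := Finset.univ.image (fun j : Fin m => ((j, j) : Fin m × Fin m)))
      (t := Finset.univ)
      (f := fun p => (∑ j, secondFlattening m j p * v j) ^ 2)
      (Finset.subset_univ _) (fun p _ _ => sq_nonneg _)
    rw [Finset.sum_image (fun a _ b _ h => hinj h)] at this
    calc (∑ j : Fin m, (v j / 6) ^ 2)
        = ∑ j : Fin m, (∑ j', secondFlattening m j' (j, j) * v j') ^ 2 := by
          exact Finset.sum_congr rfl (fun j _ => by rw [hdiag j])
      _ ≤ _ := this
  have hnorm : ‖v‖ / 6 = Real.sqrt (∑ j : Fin m, (v j / 6) ^ 2) := by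
    rw [EuclideanSpace.norm_eq]
    rw [show (∑ j : Fin m, (v j / 6) ^ 2) = (∑ j : Fin m, ‖v j‖ ^ 2) / 36 from by
      rw [Finset.sum_div]
      exact Finset.sum_congr rfl (fun j _ => by rw [Real.norm_eq_abs, sq_abs]; ring)]
    rw [Real.sqrt_div (Finset.sum_nonneg fun j _ => sq_nonneg _),
      show Real.sqrt 36 = 6 from by
        rw [show (36 : ℝ) = 6 ^ 2 by norm_num, Real.sqrt_sq (by norm_num)]]
  rw [ge_iff_le, hnorm]
  exact Real.sqrt_le_sqrt key
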